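/- arXiv:1812.05234 — 5 statements merged into one kernel-verified Lean document; each statement's English description precedes it below -/
import Mathlib

section
/- The polynomial \overline{W}_K(t) = W_K(t) - W_K(t^{-1}) is invariant under crossing changes, where W_K(t) = Σ_{c : Ind(c) ≠ 0} ω(c) t^{Ind(c)}. -/
/-! Each chord contributes `ω c • (t ^ Ind c - t ^ (-Ind c))` to `W̄_K`; a chord of index `0`
contributes nothing, so the restriction to `Ind c ≠ 0` can be dropped. This contribution is
unchanged when `Ind c` and `ω c` are both negated, which is all a crossing change does. -/

open Finset LaurentPolynomial

namespace LaurentPolynomial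

variable {R : Type*} [Ring R]

theorem neg_smul_T_neg_sub_T_neg_neg (n w : ℤ) :
    (-w) • (T (-n) - T (-(-n)) : R[T;T⁻¹]) = w • (T n - T (-n)) := by
  rw [neg_neg, neg_smul, ← smul_neg, neg_sub]

theorem sum_filter_ne_zero_smul_T_sub_sum {ι : Type*} (s : Finset ι) (n w : ι → ℤ) :
    (∑ c ∈ s.filter (fun c => n c ≠ 0), w c • T (n c) -
        ∑ c ∈ s.filter (fun c => n c ≠ 0), w c • T (-(n c)) : R[T;T⁻¹]) =
      ∑ c ∈ s, w c • (T (n c) - T (-(n c))) := by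
  rw [← sum_sub_distrib]
  simp_rw [← smul_sub]
  refine sum_filter_of_ne fun c _ hc h => hc ?_
  rw [h, neg_zero, sub_self, smul_zero]

end LaurentPolynomial

theorem Finset.sum_eq_sum_of_neg_at {C M : Type*} [AddCommMonoid M] (s : Finset C)
    (F : ℤ → ℤ → M) (hF : ∀ n w, F (-n) (-w) = F n w)
    (n w n' w' : C → ℤ) (c₀ : C)
    (hn : n' c₀ = - n c₀) (hw : w' c₀ = - w c₀)
    (hn_ne : ∀ a, a ≠ c₀ → n' a = n a) (hw_ne : ∀ a, a ≠ c₀ → w' a = w a) :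
    ∑ c ∈ s, F (n c) (w c) = ∑ c ∈ s, F (n' c) (w' c) := by
  refine sum_congr rfl fun a _ => ?_
  by_cases h : a = c₀
  · rw [h, hn, hw, hF]
  · rw [hn_ne a h, hw_ne a h]

theorem writheBar_crossing_change_invariant_general {C : Type} [Fintype C]
    (Ind ω Ind' ω' : C → ℤ) (c₀ : C)
    (hI : Ind' c₀ = - Ind c₀) (hw : ω' c₀ = - ω c₀)
    (hIother : ∀ a : C, a ≠ c₀ → Ind' a = Ind a)
    (hwother : ∀ a : C, a ≠ c₀ → ω' a = ω a) :
    ((∑ c ∈ univ.filter (fun c => Ind c ≠ 0), ω c • T (Ind c)) -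
        (∑ c ∈ univ.filter (fun c => Ind c ≠ 0), ω c • T (-(Ind c)))
        : LaurentPolynomial ℤ) =
      (∑ c ∈ univ.filter (fun c => Ind' c ≠ 0), ω' c • T (Ind' c)) -
        (∑ c ∈ univ.filter (fun c => Ind' c ≠ 0), ω' c • T (-(Ind' c))) := by
  rw [sum_filter_ne_zero_smul_T_sub_sum, sum_filter_ne_zero_smul_T_sub_sum]
  exact sum_eq_sum_of_neg_at univ (fun n w => w • (T n - T (-n))) neg_smul_T_neg_sub_T_neg_neg
    Ind ω Ind' ω' c₀ hI hw hIother hwother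

/-- `W̄_K(t) = W_K(t) - W_K(t⁻¹)` is invariant under a crossing change.
A Gauss diagram is abstracted by its finite set `C` of chords together with the index
function `Ind : C → ℤ` and writhe `ω : C → ℤ`.  A crossing change at `c₀` sends
`Ind c₀ ↦ -Ind c₀`, `ω c₀ ↦ -ω c₀` and fixes all other chords.  Here
`W_K(t) = ∑_{Ind c ≠ 0} ω c • t^(Ind c)` and `W_K(t⁻¹) = ∑_{Ind c ≠ 0} ω c • t^(-Ind c)`. -/
theorem writheBar_crossing_change_invariant {C : Type} [Fintype C] [DecidableEq C]
    (Ind ω Ind' ω' : C → ℤ) (c₀ : C)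
    (hI : Ind' c₀ = - Ind c₀) (hw : ω' c₀ = - ω c₀)
    (hIother : ∀ a : C, a ≠ c₀ → Ind' a = Ind a)
    (hwother : ∀ a : C, a ≠ c₀ → ω' a = ω a) :
    ((∑ c ∈ univ.filter (fun c => Ind c ≠ 0), ω c • T (Ind c)) -
        (∑ c ∈ univ.filter (fun c => Ind c ≠ 0), ω c • T (-(Ind c)))
        : LaurentPolynomial ℤ) =
      (∑ c ∈ univ.filter (fun c => Ind' c ≠ 0), ω' c • T (Ind' c)) -
        (∑ c ∈ univ.filter (fun c => Ind' c ≠ 0), ω' c • T (-(Ind' c))) :=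
  writheBar_crossing_change_invariant_general Ind ω Ind' ω' c₀ hI hw hIother hwother
end

section
/- With notation as above, the polynomial \overline{W}_L(t) = Σᵢ (Wᵢ(t) − t^{span_{Kᵢ}} Wᵢ(t^{-1})) is invariant under a crossing change at any chord of L, where Wᵢ(t) = Σ_{c self-chord of Kᵢ, Ind(c) ≠ 0} ω(c) t^{Ind'(c)}. -/
open Finset LaurentPolynomial

/-! The chord `c₀` itself is the only one whose contribution can change. If it is a linking
chord it contributes nothing on either side. If it is a self-chord, `Ind c₀ ≠ 0` is preserved, and
the reflection `Ind' ↦ span - Ind'` swaps the two monomials `T Ind'` and `T (span - Ind')`, which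
the sign change of `ω c₀` compensates. -/

theorem LaurentPolynomial.neg_smul_T_sub_T_reflect {R : Type*} [Ring R] (w k s : ℤ) :
    (-w) • (T (s - k) - T (s - (s - k)) : R[T;T⁻¹]) = w • (T k - T (s - k)) := by
  rw [sub_sub_cancel, neg_smul, ← smul_neg, neg_sub]

theorem writheBar_link_crossing_change_invariant_general {C ι : Type} [Fintype C]
    (isSelf : C → Prop) [DecidablePred isSelf] (comp : C → ι) (span : ι → ℤ)
    (ω Ind Ind' ω₂ Ind₂ Ind'₂ : C → ℤ) (c₀ : C)
    (hother : ∀ a : C, a ≠ c₀ → ω₂ a = ω a ∧ Ind₂ a = Ind a ∧ Ind'₂ a = Ind' a)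
    (hself : isSelf c₀ → ω₂ c₀ = - ω c₀ ∧ Ind₂ c₀ = - Ind c₀ ∧
      Ind'₂ c₀ = span (comp c₀) - Ind' c₀) :
    (∑ c ∈ univ.filter (fun c => isSelf c ∧ Ind c ≠ 0),
        ω c • (T (Ind' c) - T (span (comp c) - Ind' c)) : LaurentPolynomial ℤ) =
      ∑ c ∈ univ.filter (fun c => isSelf c ∧ Ind₂ c ≠ 0),
        ω₂ c • (T (Ind'₂ c) - T (span (comp c) - Ind'₂ c)) := by
  have hselfChord : ∀ a, isSelf a → (Ind a ≠ 0 ↔ Ind₂ a ≠ 0) ∧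
      (ω a • (T (Ind' a) - T (span (comp a) - Ind' a)) : ℤ[T;T⁻¹]) =
        ω₂ a • (T (Ind'₂ a) - T (span (comp a) - Ind'₂ a)) := by
    intro a ha
    rcases eq_or_ne a c₀ with rfl | hne
    · obtain ⟨hω, hInd, hInd'⟩ := hself ha
      rw [hω, hInd, hInd', neg_ne_zero, neg_smul_T_sub_T_reflect]
      exact ⟨Iff.rfl, rfl⟩
    · obtain ⟨hω, hInd, hInd'⟩ := hother a hne
      rw [hω, hInd, hInd']
      exact ⟨Iff.rfl, rfl⟩
  refine sum_congr (filter_congr fun a _ => ?_) fun a ha => ?_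
  · exact and_congr_right fun ha => (hselfChord a ha).1
  · exact (hselfChord a (mem_filter.1 ha).2.1).2

/-- `W̄_L(t) = Σᵢ (Wᵢ(t) − t^{span_{Kᵢ}} Wᵢ(t⁻¹))` is invariant under a
crossing change at any chord `c₀`.  Chords `C` carry a component `comp`, a self/linking
flag `isSelf`, writhe `ω`, indices `Ind` (within the component) and `Ind'`.  The
crossing change fixes all data at chords `≠ c₀` and all spans; if `c₀` is a self-chord
it sends `ω c₀ ↦ -ω c₀`, `Ind c₀ ↦ -Ind c₀`, `Ind' c₀ ↦ span (comp c₀) - Ind' c₀`;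
if `c₀` is a linking chord all self-chord data is unchanged.  Here
`W̄_L = ∑_{c self, Ind c ≠ 0} ω c • (t^{Ind' c} - t^{span(comp c) - Ind' c})`. -/
theorem writheBar_link_crossing_change_invariant {C ι : Type} [Fintype C] [DecidableEq C]
    (isSelf : C → Prop) [DecidablePred isSelf] (comp : C → ι) (span : ι → ℤ)
    (ω Ind Ind' ω₂ Ind₂ Ind'₂ : C → ℤ) (c₀ : C)
    (hother : ∀ a : C, a ≠ c₀ → ω₂ a = ω a ∧ Ind₂ a = Ind a ∧ Ind'₂ a = Ind' a)
    (hself : isSelf c₀ → ω₂ c₀ = - ω c₀ ∧ Ind₂ c₀ = - Ind c₀ ∧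
      Ind'₂ c₀ = span (comp c₀) - Ind' c₀)
    (hlink : ¬ isSelf c₀ → ω₂ c₀ = ω c₀ ∧ Ind₂ c₀ = Ind c₀ ∧ Ind'₂ c₀ = Ind' c₀) :
    (∑ c ∈ univ.filter (fun c => isSelf c ∧ Ind c ≠ 0),
        ω c • (T (Ind' c) - T (span (comp c) - Ind' c)) : LaurentPolynomial ℤ) =
      ∑ c ∈ univ.filter (fun c => isSelf c ∧ Ind₂ c ≠ 0),
        ω₂ c • (T (Ind'₂ c) - T (span (comp c) - Ind'₂ c)) :=
  writheBar_link_crossing_change_invariant_general isSelf comp span ω Ind Ind' ω₂ Ind₂ Ind'₂ c₀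
    hother hself
end

section
/- Under switching all chords of L (crossing change at every real chord), the writhe polynomial satisfies W_{\overline{L}}(t) = Σᵢ (− t^{span_{Kᵢ}} Wᵢ(t^{-1})). -/
open Finset LaurentPolynomial

theorem writhe_switch_all_general {C ι : Type} [Fintype C]
    (isSelf : C → Prop) [DecidablePred isSelf] (comp : C → ι) (span : ι → ℤ)
    (ω Ind Ind' ωbar Indbar Ind'bar : C → ℤ)
    (hbar : ∀ c : C, isSelf c → ωbar c = - ω c ∧ Indbar c = - Ind c ∧
      Ind'bar c = span (comp c) - Ind' c) :
    (∑ c ∈ univ.filter (fun c => isSelf c ∧ Indbar c ≠ 0),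
        ωbar c • T (Ind'bar c) : LaurentPolynomial ℤ) =
      - ∑ c ∈ univ.filter (fun c => isSelf c ∧ Ind c ≠ 0),
          ω c • T (span (comp c) - Ind' c) := by
  have same_chords : univ.filter (fun c => isSelf c ∧ Indbar c ≠ 0) =
      univ.filter (fun c => isSelf c ∧ Ind c ≠ 0) :=
    filter_congr fun c _ => and_congr_right fun hc => by rw [(hbar c hc).2.1, neg_ne_zero]
  rw [same_chords, ← sum_neg_distrib]
  refine sum_congr rfl fun c hc => ?_
  obtain ⟨hω, -, hInd'⟩ := hbar c (mem_filter.1 hc).2.1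
  rw [hω, hInd', neg_smul]

/-- switching all chords of `L` gives
`W_{L̄}(t) = Σᵢ (− t^{span_{Kᵢ}} Wᵢ(t⁻¹))`.  In `L̄` each self-chord `c` of `Kᵢ` has
`ω̄ c = -ω c`, `Ind̄ c = -Ind c`, and `Ind'̄ c = span_{Kᵢ} - Ind' c`.  Here
`Wᵢ(t) = ∑_{c self-chord of Kᵢ, Ind c ≠ 0} ω c • t^{Ind' c}`, so the right-hand side is
`-∑_{c self, Ind c ≠ 0} ω c • t^{span(comp c) - Ind' c}`. -/
theorem writhe_switch_all {C ι : Type} [Fintype C] [DecidableEq C]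
    (isSelf : C → Prop) [DecidablePred isSelf] (comp : C → ι) (span : ι → ℤ)
    (ω Ind Ind' ωbar Indbar Ind'bar : C → ℤ)
    (hbar : ∀ c : C, isSelf c → ωbar c = - ω c ∧ Indbar c = - Ind c ∧
      Ind'bar c = span (comp c) - Ind' c) :
    (∑ c ∈ univ.filter (fun c => isSelf c ∧ Indbar c ≠ 0),
        ωbar c • T (Ind'bar c) : LaurentPolynomial ℤ) =
      - ∑ c ∈ univ.filter (fun c => isSelf c ∧ Ind c ≠ 0),
          ω c • T (span (comp c) - Ind' c) :=
  writhe_switch_all_general isSelf comp span ω Ind Ind' ωbar Indbar Ind'bar hbar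
end

section
/- In the Gauss-diagram Ω2a configuration, for any chord d not involved in the move, the contributions of the two move chords c₁, c₂ to Ind'(d) cancel: either both relevant endpoints of c₁ and c₂ lie in left(d) or both lie outside, and their signs are opposite, so Ind'(d) computed before and after removing the pair c₁, c₂ agree. -/
/-!
The four endpoints of `c₁` and `c₂` form the two adjacent pairs `{h₁, h₂}` and `{t₁, t₂}`.
Each pair lies on one side of `left d` and carries opposite signs, so it contributes `0` to
`Ind'(d)`; hence dropping the four endpoints leaves the sum unchanged.
-/

open Finset

namespace Finset

variable {ι M : Type*} [DecidableEq ι]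

theorem pair_disjoint_of_card_eq_four {a b c d : ι} (h : #({a, b, c, d} : Finset ι) = 4) :
    a ≠ b ∧ c ≠ d ∧ Disjoint ({a, b} : Finset ι) {c, d} := by
  have hunion : ({a, b} ∪ {c, d} : Finset ι) = {a, b, c, d} := by
    rw [insert_union, singleton_union]
  have hcard := card_union_add_card_inter ({a, b} : Finset ι) {c, d}
  have hab : #({a, b} : Finset ι) ≤ 2 := card_le_two
  have hcd : #({c, d} : Finset ι) ≤ 2 := card_le_two
  rw [hunion, h] at hcard
  refine ⟨fun hab' => ?_, fun hcd' => ?_,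
    disjoint_iff_inter_eq_empty.mpr (card_eq_zero.mp (by omega))⟩
  · simp only [hab', mem_singleton, insert_eq_of_mem, card_singleton] at hcard; omega
  · simp only [hcd', mem_singleton, insert_eq_of_mem, card_singleton] at hcard; omega

variable [AddCommGroup M]

theorem sum_inter_pair_eq_zero {s : Finset ι} {f : ι → M} {a b : ι} (hab : a ≠ b)
    (hf : f a = -f b) (hmem : a ∈ s ↔ b ∈ s) : ∑ e ∈ s ∩ {a, b}, f e = 0 := by
  rw [inter_comm, ← filter_mem_eq_inter, sum_filter, sum_pair hab]
  by_cases ha : a ∈ s <;> simp [ha, ← hmem, hf]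

theorem sum_filter_eq_sum_filter_not_mem {s t : Finset ι} {p : ι → Prop} [DecidablePred p]
    {f : ι → M} (hp : ∀ e ∈ t, p e) (ht : ∑ e ∈ s ∩ t, f e = 0) :
    ∑ e ∈ s with p e, f e = ∑ e ∈ s with p e ∧ e ∉ t, f e := by
  rw [← sum_filter_add_sum_filter_not (s.filter p) (· ∈ t), filter_filter, filter_filter]
  have hinter : s.filter (fun e => p e ∧ e ∈ t) = s ∩ t := by
    ext e
    simp only [mem_filter, mem_inter]
    exact ⟨fun h => ⟨h.1, h.2.2⟩, fun h => ⟨h.1, hp e h.2, h.2⟩⟩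
  rw [hinter, ht, zero_add]

end Finset

theorem omega2a_pair_no_contribution_general {E C : Type} [Fintype E] [DecidableEq E] [DecidableEq C]
    (chordOf : E → C) (sign : E → ℤ) (leftd : Finset E) (d c₁ c₂ : C)
    (h₁ h₂ t₁ t₂ : E)
    (hd₁ : d ≠ c₁) (hd₂ : d ≠ c₂)
    (hall : univ.filter (fun e => chordOf e = c₁ ∨ chordOf e = c₂) = {h₁, h₂, t₁, t₂})
    (hdistinct : ({h₁, h₂, t₁, t₂} : Finset E).card = 4)
    (hsignh : sign h₁ = - sign h₂) (hsignt : sign t₁ = - sign t₂)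
    (hmemh : h₁ ∈ leftd ↔ h₂ ∈ leftd) (hmemt : t₁ ∈ leftd ↔ t₂ ∈ leftd) :
    ∑ e ∈ leftd.filter (fun e => chordOf e ≠ d), sign e =
      ∑ e ∈ leftd.filter (fun e => chordOf e ≠ d ∧ chordOf e ≠ c₁ ∧ chordOf e ≠ c₂),
        sign e := by
  have hmem_iff (e : E) :
      e ∈ ({h₁, h₂, t₁, t₂} : Finset E) ↔ chordOf e = c₁ ∨ chordOf e = c₂ := by
    simp [← hall]
  have hne_d : ∀ e ∈ ({h₁, h₂, t₁, t₂} : Finset E), chordOf e ≠ d := by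
    intro e he
    rcases (hmem_iff e).mp he with h | h <;> rw [h]
    exacts [hd₁.symm, hd₂.symm]
  obtain ⟨hh, ht, hdisj⟩ := pair_disjoint_of_card_eq_four hdistinct
  have hcancel : ∑ e ∈ leftd ∩ {h₁, h₂, t₁, t₂}, sign e = 0 := by
    have hsplit : ({h₁, h₂, t₁, t₂} : Finset E) = {h₁, h₂} ∪ {t₁, t₂} := by
      rw [insert_union, singleton_union]
    rw [hsplit, inter_union_distrib_left,
      sum_union (hdisj.mono inter_subset_right inter_subset_right),
      sum_inter_pair_eq_zero hh hsignh hmemh, sum_inter_pair_eq_zero ht hsignt hmemt, add_zero]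
  rw [sum_filter_eq_sum_filter_not_mem hne_d hcancel]
  refine sum_congr (filter_congr fun e _ => ?_) fun _ _ => rfl
  rw [hmem_iff]
  tauto

/-- in the Ω2a configuration, the contributions of the two move chords
`c₁, c₂` to `Ind'(d)` of any chord `d ∉ {c₁, c₂}` cancel.  The four endpoints
`h₁, h₂, t₁, t₂` of `c₁` and `c₂` come in two adjacent pairs with opposite signs, and
the members of each adjacent pair lie on the same side of `left d`.  Hence `Ind'(d)`
equals the index computed after deleting the pair `c₁, c₂`. -/
theorem omega2a_pair_no_contribution {E C : Type} [Fintype E] [DecidableEq E] [DecidableEq C]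
    (chordOf : E → C) (sign : E → ℤ) (leftd : Finset E) (d c₁ c₂ : C)
    (h₁ h₂ t₁ t₂ : E)
    (hd₁ : d ≠ c₁) (hd₂ : d ≠ c₂)
    (hch₁ : chordOf h₁ = c₁) (hch₂ : chordOf h₂ = c₂)
    (hct₁ : chordOf t₁ = c₁) (hct₂ : chordOf t₂ = c₂)
    (hall : univ.filter (fun e => chordOf e = c₁ ∨ chordOf e = c₂) = {h₁, h₂, t₁, t₂})
    (hdistinct : ({h₁, h₂, t₁, t₂} : Finset E).card = 4)
    (hsignh : sign h₁ = - sign h₂) (hsignt : sign t₁ = - sign t₂)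
    (hmemh : h₁ ∈ leftd ↔ h₂ ∈ leftd) (hmemt : t₁ ∈ leftd ↔ t₂ ∈ leftd) :
    ∑ e ∈ leftd.filter (fun e => chordOf e ≠ d), sign e =
      ∑ e ∈ leftd.filter (fun e => chordOf e ≠ d ∧ chordOf e ≠ c₁ ∧ chordOf e ≠ c₂),
        sign e :=
  omega2a_pair_no_contribution_general chordOf sign leftd d c₁ c₂ h₁ h₂ t₁ t₂ hd₁ hd₂ hall hdistinct
    hsignh hsignt hmemh hmemt
end

section
/- Suppose wci is a weak chord index with values in ℤ, ω assigns ±1 to crossings, Ind is a chord index with Ind = 0 at Ω1 crossings, at Ω2a pairs Ind(c₁)=Ind(c₂) and ω(c₁)=−ω(c₂), and matched crossings under all other moves preserve Ind, wci and ω. Then G_L(t) = Σ_{c ∈ S(L), Ind(c) ≠ 0} ω(c) t^{wci(c)} is invariant under all the generating moves (Ω1, Ω2a, Ω3a, virtual moves). -/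
open Finset LaurentPolynomial

/-!
The crossings matched by the bijection `φ` contribute identical terms to both sides, so
`G_L(t)` can only change through the crossings in `A` and `B`. These contribute nothing:
an Ω1 crossing has index `0` and is filtered out, and the two crossings of an Ω2a move
are either both filtered out or contribute `ω c • t^{wci c} - ω c • t^{wci c}`.
-/

section

variable {X : Type*} (ω Ind wci : X → ℤ)

/-- `G_L(t)`, with `S` the set of self crossings of `L`. -/
noncomputable def gPolynomial (S : Finset X) : LaurentPolynomial ℤ :=
  ∑ c ∈ S.filter (fun c => Ind c ≠ 0), ω c • T (wci c)

variable {ω Ind wci}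

lemma gPolynomial_eq_sum_ite (S : Finset X) :
    gPolynomial ω Ind wci S = ∑ c ∈ S, if Ind c ≠ 0 then ω c • T (wci c) else 0 :=
  sum_filter _ _

lemma gPolynomial_sdiff_add [DecidableEq X] {S A : Finset X} (hA : A ⊆ S) :
    gPolynomial ω Ind wci (S \ A) + gPolynomial ω Ind wci A = gPolynomial ω Ind wci S := by
  simp only [gPolynomial_eq_sum_ite]
  exact sum_sdiff hA

lemma gPolynomial_eq_of_bijOn {S S' : Finset X} {φ : X → X} (hφ : Set.BijOn φ S S')
    (hpres : ∀ c ∈ S, ω (φ c) = ω c ∧ Ind (φ c) = Ind c ∧ wci (φ c) = wci c) :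
    gPolynomial ω Ind wci S = gPolynomial ω Ind wci S' := by
  simp only [gPolynomial_eq_sum_ite]
  refine sum_nbij φ (fun c hc => hφ.mapsTo hc) hφ.injOn hφ.surjOn fun c hc => ?_
  obtain ⟨hω, hInd, hwci⟩ := hpres c hc
  rw [hω, hInd, hwci]

lemma gPolynomial_eq_zero_of_ind_eq_zero {A : Finset X} (hA : ∀ c ∈ A, Ind c = 0) :
    gPolynomial ω Ind wci A = 0 := by
  rw [gPolynomial_eq_sum_ite]
  exact sum_eq_zero fun c hc => if_neg (not_not.mpr (hA c hc))

lemma gPolynomial_pair_eq_zero [DecidableEq X] {c₁ c₂ : X} (hne : c₁ ≠ c₂)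
    (hInd : Ind c₁ = Ind c₂) (hwci : wci c₁ = wci c₂) (hω : ω c₁ = -ω c₂) :
    gPolynomial ω Ind wci {c₁, c₂} = 0 := by
  rw [gPolynomial_eq_sum_ite, sum_pair hne, hInd, hwci, hω, neg_smul, ite_add_ite,
    neg_add_cancel, add_zero, ite_self]

lemma gPolynomial_eq_of_bijOn_sdiff [DecidableEq X] {S S' A B : Finset X} {φ : X → X}
    (hA : A ⊆ S) (hB : B ⊆ S') (hφ : Set.BijOn φ ↑(S \ A) ↑(S' \ B))
    (hpres : ∀ c ∈ S \ A, ω (φ c) = ω c ∧ Ind (φ c) = Ind c ∧ wci (φ c) = wci c)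
    (hA₀ : gPolynomial ω Ind wci A = 0) (hB₀ : gPolynomial ω Ind wci B = 0) :
    gPolynomial ω Ind wci S = gPolynomial ω Ind wci S' := by
  rw [← gPolynomial_sdiff_add hA, ← gPolynomial_sdiff_add hB, hA₀, hB₀,
    gPolynomial_eq_of_bijOn hφ hpres]

end

/-- invariance of `G_L(t) = ∑_{c ∈ S(L), Ind c ≠ 0} ω c • t^{wci c}` under
a generating move.  A move from a diagram with self crossings `S` to one with self
crossings `S'` consists of a bijection `φ : S \ A → S' \ B` preserving `ω`, `Ind`, `wci`,
where either (Ω1) `A` is a single crossing of index `0` and `B = ∅` (or symmetrically);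
or (Ω2a) `A` is a pair `{c₁, c₂}` with equal `Ind`, equal `wci` and opposite writhes,
and `B = ∅` (or symmetrically); or (all other generating moves) `A = B = ∅`. -/
theorem G_invariant_under_generating_moves {X : Type} [DecidableEq X]
    (S S' A B : Finset X) (ω Ind wci : X → ℤ) (φ : X → X)
    (hA : A ⊆ S) (hB : B ⊆ S')
    (hbij : Set.BijOn φ ↑(S \ A) ↑(S' \ B))
    (hpres : ∀ c ∈ S \ A, ω (φ c) = ω c ∧ Ind (φ c) = Ind c ∧ wci (φ c) = wci c)
    (hcase :
      (∃ c, (A = {c} ∧ Ind c = 0 ∧ B = ∅) ∨ (B = {c} ∧ Ind c = 0 ∧ A = ∅)) ∨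
      (∃ c₁ c₂, c₁ ≠ c₂ ∧ Ind c₁ = Ind c₂ ∧ wci c₁ = wci c₂ ∧ ω c₁ = - ω c₂ ∧
        ((A = {c₁, c₂} ∧ B = ∅) ∨ (B = {c₁, c₂} ∧ A = ∅))) ∨
      (A = ∅ ∧ B = ∅)) :
    (∑ c ∈ S.filter (fun c => Ind c ≠ 0), ω c • T (wci c) : LaurentPolynomial ℤ) =
      ∑ c ∈ S'.filter (fun c => Ind c ≠ 0), ω c • T (wci c) := by
  have hempty : gPolynomial ω Ind wci (∅ : Finset X) = 0 := sum_empty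
  have hsingle : ∀ c, Ind c = 0 → gPolynomial ω Ind wci {c} = 0 := fun c hc =>
    gPolynomial_eq_zero_of_ind_eq_zero fun _ h => (mem_singleton.mp h).symm ▸ hc
  obtain ⟨hA₀, hB₀⟩ : gPolynomial ω Ind wci A = 0 ∧ gPolynomial ω Ind wci B = 0 := by
    rcases hcase with ⟨c, ⟨rfl, hc, rfl⟩ | ⟨rfl, hc, rfl⟩⟩ |
        ⟨c₁, c₂, hne, hInd, hwci, hω, ⟨rfl, rfl⟩ | ⟨rfl, rfl⟩⟩ | ⟨rfl, rfl⟩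
    · exact ⟨hsingle c hc, hempty⟩
    · exact ⟨hempty, hsingle c hc⟩
    · exact ⟨gPolynomial_pair_eq_zero hne hInd hwci hω, hempty⟩
    · exact ⟨hempty, gPolynomial_pair_eq_zero hne hInd hwci hω⟩
    · exact ⟨hempty, hempty⟩
  exact gPolynomial_eq_of_bijOn_sdiff hA hB hbij hpres hA₀ hB₀
end
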